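/- arXiv:1609.03919 — 2 statements merged into one kernel-verified Lean document; each statement's English description precedes it below -/
import Mathlib

section
/- Let n be a positive integer, S odd, and nonnegative integers \alpha,\beta \le n. Then \sum over x in [0,2^n) with 2^\alpha | x of e^{2\pi i S 2^\beta x^2/2^n} equals 2^{n-\alpha} if 2\alpha+\beta \ge n, equals 0 if 2\alpha+\beta = n-1, and equals 2^\beta G(S;2^{n-\beta}) if 2\alpha+\beta \le n-2. -/
open Finset

/-!
Writing `x = 2^α y` turns the sum into `∑_{y < 2^(n-α)} e(S y² / 2^m)` with `m = n - (2α + β)`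
(truncated at `0`). For `m = 0` every term is `1`, for `m = 1` the terms alternate in sign, and for
`m ≥ 2` the summand has period `2^m`, so the sum is `2^(α+β) G(S; 2^m)`. It remains to see that
`G(S; 2^(m+2)) = 2 G(S; 2^m)` for `m ≥ 2`: the even `x` contribute `2 G(S; 2^m)`, while the odd `x`
cancel in pairs `x, x + 2^m`, because `(x + 2^m)² ≡ x² + 2^(m+1) x (mod 2^(m+2))`.
-/

noncomputable def Gsum (S : ℤ) (k : ℕ) : ℂ :=
  ∑ x ∈ Finset.range k,
    Complex.exp (2 * Real.pi * Complex.I * ((S * (x : ℤ) ^ 2 : ℤ) : ℂ) / (k : ℂ))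

noncomputable def Gsum2 (a b c S : ℤ) (k : ℕ) : ℂ :=
  ∑ x ∈ Finset.range k, ∑ y ∈ Finset.range k,
    Complex.exp (2 * Real.pi * Complex.I *
      ((S * (a * (x : ℤ) ^ 2 + b * (x : ℤ) * (y : ℤ) + c * (y : ℤ) ^ 2) : ℤ) : ℂ) / (k : ℂ))

section RangeSums

variable {M : Type*} [AddCommMonoid M]

theorem Finset.sum_range_two_mul (f : ℕ → M) (k : ℕ) :
    ∑ x ∈ range (2 * k), f x =
      ∑ y ∈ range k, f (2 * y) + ∑ y ∈ range k, f (2 * y + 1) := by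
  induction k with
  | zero => simp
  | succ k ih =>
    rw [show 2 * (k + 1) = 2 * k + 1 + 1 by ring, sum_range_succ, sum_range_succ, ih,
      sum_range_succ, sum_range_succ]
    abel

theorem Finset.sum_filter_dvd_range_mul (f : ℕ → M) {a : ℕ} (ha : 0 < a) (b : ℕ) :
    ∑ x ∈ (range (a * b)).filter (a ∣ ·), f x = ∑ y ∈ range b, f (a * y) := by
  have himage : (range (a * b)).filter (a ∣ ·) = (range b).image (a * ·) := by
    ext x
    simp only [mem_filter, mem_range, mem_image]
    constructor
    · rintro ⟨hx, y, rfl⟩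
      exact ⟨y, Nat.lt_of_mul_lt_mul_left hx, rfl⟩
    · rintro ⟨y, hy, rfl⟩
      exact ⟨Nat.mul_lt_mul_of_pos_left hy ha, dvd_mul_right a y⟩
  rw [himage, sum_image fun x _ y _ h => Nat.eq_of_mul_eq_mul_left ha h]

theorem Function.Periodic.sum_range_mul {f : ℕ → M} {k : ℕ} (hf : Function.Periodic f k)
    (c : ℕ) : ∑ x ∈ range (c * k), f x = c • ∑ x ∈ range k, f x := by
  induction c with
  | zero => simp
  | succ c ih =>
    rw [add_mul, one_mul, sum_range_add, ih, succ_nsmul]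
    congr 1
    exact sum_congr rfl fun x _ => by rw [add_comm]; exact hf.nat_mul c x

theorem Function.Antiperiodic.sum_range_eq_zero {G : Type*} [AddCommGroup G] {f : ℕ → G}
    {k N : ℕ} (hf : Function.Antiperiodic f k) (hN : 2 * k ∣ N) :
    ∑ x ∈ range N, f x = 0 := by
  obtain ⟨c, rfl⟩ := hN
  rw [mul_comm, hf.periodic_two_mul.sum_range_mul, two_mul, sum_range_add]
  simp [add_comm k, hf _]

end RangeSums

noncomputable def dyadicExp (N : ℕ) (t : ℤ) : ℂ :=
  Complex.exp (2 * Real.pi * Complex.I * (t : ℂ) / (2 : ℂ) ^ N)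

theorem dyadicExp_add (N : ℕ) (t u : ℤ) :
    dyadicExp N (t + u) = dyadicExp N t * dyadicExp N u := by
  rw [dyadicExp, dyadicExp, dyadicExp, ← Complex.exp_add]
  congr 1
  push_cast
  ring

theorem dyadicExp_eq_one_of_dvd {N : ℕ} {t : ℤ} (h : 2 ^ N ∣ t) : dyadicExp N t = 1 := by
  obtain ⟨s, rfl⟩ := h
  rw [dyadicExp, ← Complex.exp_int_mul_two_pi_mul_I s]
  congr 1
  push_cast
  field_simp

theorem dyadicExp_two_pow_mul (N k : ℕ) (t : ℤ) :
    dyadicExp N (2 ^ k * t) = dyadicExp (N - k) t := by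
  rcases le_or_gt k N with hk | hk
  · obtain ⟨M, rfl⟩ := Nat.exists_eq_add_of_le' hk
    rw [Nat.add_sub_cancel, dyadicExp, dyadicExp, pow_add]
    congr 1
    push_cast
    field_simp
  · rw [dyadicExp_eq_one_of_dvd ((pow_dvd_pow 2 hk.le).mul_right t),
      dyadicExp_eq_one_of_dvd (by simp [Nat.sub_eq_zero_of_le hk.le])]

theorem dyadicExp_one_of_odd {t : ℤ} (ht : Odd t) : dyadicExp 1 t = -1 := by
  rw [dyadicExp,
    show 2 * (Real.pi : ℂ) * Complex.I * t / 2 ^ 1 = t * (Real.pi * Complex.I) by ring,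
    Complex.exp_int_mul, Complex.exp_pi_mul_I, ht.neg_one_zpow]

theorem dyadicExp_mul_sq_periodic (S : ℤ) {N k : ℕ} (hk : N ≤ k + 1) (hk' : N ≤ 2 * k) :
    Function.Periodic (fun x : ℕ => dyadicExp N (S * (x : ℤ) ^ 2)) (2 ^ k) := by
  intro x
  have hexpand : S * ((x + 2 ^ k : ℕ) : ℤ) ^ 2 =
      S * (x : ℤ) ^ 2 + S * (2 ^ (k + 1) * x + 2 ^ (2 * k)) := by
    push_cast
    ring
  have hdvd : (2 : ℤ) ^ N ∣ S * (2 ^ (k + 1) * x + 2 ^ (2 * k)) :=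
    dvd_mul_of_dvd_right
      (dvd_add ((pow_dvd_pow 2 hk).mul_right _) (pow_dvd_pow 2 hk')) S
  simp only [hexpand, dyadicExp_add, dyadicExp_eq_one_of_dvd hdvd, mul_one]

theorem dyadicExp_one_mul_sq_antiperiodic {S : ℤ} (hS : Odd S) :
    Function.Antiperiodic (fun x : ℕ => dyadicExp 1 (S * (x : ℤ) ^ 2)) 1 := by
  intro x
  have hexpand : S * ((x + 1 : ℕ) : ℤ) ^ 2 = S * (x : ℤ) ^ 2 + S * (2 * x + 1) := by
    push_cast
    ring
  simp only [hexpand, dyadicExp_add, dyadicExp_one_of_odd (hS.mul (odd_two_mul_add_one _)),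
    mul_neg_one]

theorem dyadicExp_mul_odd_sq_antiperiodic {S : ℤ} (hS : Odd S) {k : ℕ} (hk : 1 ≤ k) :
    Function.Antiperiodic (fun y : ℕ => dyadicExp (k + 3) (S * ((2 * y + 1 : ℕ) : ℤ) ^ 2))
      (2 ^ k) := by
  intro y
  have hexpand : S * ((2 * (y + 2 ^ k) + 1 : ℕ) : ℤ) ^ 2 =
      S * ((2 * y + 1 : ℕ) : ℤ) ^ 2 + 2 ^ (k + 2) * (S * (2 * y + 1)) +
        S * 2 ^ (2 * k + 2) := by
    push_cast
    ring
  have hsign : dyadicExp (k + 3) (2 ^ (k + 2) * (S * (2 * y + 1))) = -1 := by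
    rw [dyadicExp_two_pow_mul, show k + 3 - (k + 2) = 1 by omega]
    exact dyadicExp_one_of_odd (hS.mul (odd_two_mul_add_one _))
  have hone : dyadicExp (k + 3) (S * 2 ^ (2 * k + 2)) = 1 :=
    dyadicExp_eq_one_of_dvd (dvd_mul_of_dvd_right (pow_dvd_pow 2 (by omega)) S)
  simp only [hexpand, dyadicExp_add, hsign, hone, mul_one, mul_neg_one]

theorem Gsum_two_pow (S : ℤ) (m : ℕ) :
    Gsum S (2 ^ m) = ∑ x ∈ range (2 ^ m), dyadicExp m (S * (x : ℤ) ^ 2) := by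
  simp [Gsum, dyadicExp]

theorem Gsum_two_pow_add_two {S : ℤ} (hS : Odd S) {m : ℕ} (hm : 2 ≤ m) :
    Gsum S (2 ^ (m + 2)) = 2 * Gsum S (2 ^ m) := by
  obtain ⟨k, rfl⟩ : ∃ k, m = k + 1 := ⟨m - 1, by omega⟩
  have heven (y : ℕ) :
      dyadicExp (k + 1 + 2) (S * ((2 * y : ℕ) : ℤ) ^ 2) =
        dyadicExp (k + 1) (S * (y : ℤ) ^ 2) := by
    rw [show S * ((2 * y : ℕ) : ℤ) ^ 2 = 2 ^ 2 * (S * (y : ℤ) ^ 2) by push_cast; ring,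
      dyadicExp_two_pow_mul, Nat.add_sub_cancel]
  have hodd :
      ∑ y ∈ range (2 ^ (k + 2)), dyadicExp (k + 3) (S * ((2 * y + 1 : ℕ) : ℤ) ^ 2) = 0 :=
    (dyadicExp_mul_odd_sq_antiperiodic hS (by omega)).sum_range_eq_zero ⟨2, by ring⟩
  rw [Gsum_two_pow, Gsum_two_pow, show 2 ^ (k + 1 + 2) = 2 * 2 ^ (k + 2) by ring,
    sum_range_two_mul, hodd, add_zero, sum_congr rfl fun y _ => heven y,
    show 2 ^ (k + 2) = 2 * 2 ^ (k + 1) by ring,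
    (dyadicExp_mul_sq_periodic (N := k + 1) (k := k + 1) S (by omega) (by omega)).sum_range_mul,
    nsmul_eq_mul, Nat.cast_ofNat]

theorem Gsum_two_pow_add_two_mul {S : ℤ} (hS : Odd S) {m : ℕ} (hm : 2 ≤ m) (a : ℕ) :
    Gsum S (2 ^ (m + 2 * a)) = 2 ^ a * Gsum S (2 ^ m) := by
  induction a with
  | zero => simp
  | succ a ih =>
    rw [show m + 2 * (a + 1) = m + 2 * a + 2 by ring, Gsum_two_pow_add_two hS (by omega), ih,
      pow_succ]
    ring

theorem sum_filter_dvd_dyadicExp (S : ℤ) {n α : ℕ} (hα : α ≤ n) (β : ℕ) :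
    ∑ x ∈ (range (2 ^ n)).filter (2 ^ α ∣ ·), dyadicExp n (S * 2 ^ β * (x : ℤ) ^ 2) =
      ∑ y ∈ range (2 ^ (n - α)), dyadicExp (n - (2 * α + β)) (S * (y : ℤ) ^ 2) := by
  rw [← pow_mul_pow_sub 2 hα, sum_filter_dvd_range_mul _ (by positivity)]
  refine sum_congr rfl fun y _ => ?_
  rw [← dyadicExp_two_pow_mul]
  congr 1
  push_cast
  ring

theorem stmt_7_general (n : ℕ) (S : ℤ) (hS : Odd S)
    (α β : ℕ) (hα : α ≤ n) :
    (2 * α + β ≥ n →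
      ∑ x ∈ (Finset.range (2 ^ n)).filter (fun x => 2 ^ α ∣ x),
          Complex.exp (2 * Real.pi * Complex.I *
            ((S * 2 ^ β * (x : ℤ) ^ 2 : ℤ) : ℂ) / ((2 : ℂ) ^ n)) =
        (2 : ℂ) ^ (n - α)) ∧
    (2 * α + β + 1 = n →
      ∑ x ∈ (Finset.range (2 ^ n)).filter (fun x => 2 ^ α ∣ x),
          Complex.exp (2 * Real.pi * Complex.I *
            ((S * 2 ^ β * (x : ℤ) ^ 2 : ℤ) : ℂ) / ((2 : ℂ) ^ n)) = 0) ∧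
    (2 * α + β + 2 ≤ n →
      ∑ x ∈ (Finset.range (2 ^ n)).filter (fun x => 2 ^ α ∣ x),
          Complex.exp (2 * Real.pi * Complex.I *
            ((S * 2 ^ β * (x : ℤ) ^ 2 : ℤ) : ℂ) / ((2 : ℂ) ^ n)) =
        (2 : ℂ) ^ β * Gsum S (2 ^ (n - β))) := by
  simp only [← dyadicExp.eq_1, sum_filter_dvd_dyadicExp S hα β]
  generalize hm : n - (2 * α + β) = m
  refine ⟨fun h => ?_, fun h => ?_, fun h => ?_⟩
  · simp [show m = 0 by omega, dyadicExp_eq_one_of_dvd]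
  · rw [show m = 1 by omega]
    exact (dyadicExp_one_mul_sq_antiperiodic hS).sum_range_eq_zero
      (pow_dvd_pow 2 (show 1 ≤ n - α by omega))
  · rw [show n - α = α + β + m by omega, pow_add,
      (dyadicExp_mul_sq_periodic (N := m) (k := m) S (by omega) (by omega)).sum_range_mul,
      ← Gsum_two_pow, show n - β = m + 2 * α by omega, Gsum_two_pow_add_two_mul hS (by omega)]
    ring

theorem stmt_7 (n : ℕ) (hn : 0 < n) (S : ℤ) (hS : Odd S)
    (α β : ℕ) (hα : α ≤ n) (hβ : β ≤ n) :
    (2 * α + β ≥ n →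
      ∑ x ∈ (Finset.range (2 ^ n)).filter (fun x => 2 ^ α ∣ x),
          Complex.exp (2 * Real.pi * Complex.I *
            ((S * 2 ^ β * (x : ℤ) ^ 2 : ℤ) : ℂ) / ((2 : ℂ) ^ n)) =
        (2 : ℂ) ^ (n - α)) ∧
    (2 * α + β + 1 = n →
      ∑ x ∈ (Finset.range (2 ^ n)).filter (fun x => 2 ^ α ∣ x),
          Complex.exp (2 * Real.pi * Complex.I *
            ((S * 2 ^ β * (x : ℤ) ^ 2 : ℤ) : ℂ) / ((2 : ℂ) ^ n)) = 0) ∧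
    (2 * α + β + 2 ≤ n →
      ∑ x ∈ (Finset.range (2 ^ n)).filter (fun x => 2 ^ α ∣ x),
          Complex.exp (2 * Real.pi * Complex.I *
            ((S * 2 ^ β * (x : ℤ) ^ 2 : ℤ) : ℂ) / ((2 : ℂ) ^ n)) =
        (2 : ℂ) ^ β * Gsum S (2 ^ (n - β))) :=
  stmt_7_general n S hS α β hα
end

section
/- Let n \ge 1, S odd, w an integer, and \alpha,\beta nonnegative integers with 2\alpha+\beta \le n-2. Then \sum over x in [0,2^n) with x \equiv w (mod 2^\alpha) of e^{2\pi i S 2^\beta x^2/2^n} equals 0 if 2^\alpha \nmid w, and equals 2^\beta G(S;2^{n-\beta}) if 2^\alpha | w. -/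
open Finset

/-!
Write `e_N(a) = exp(2πi a / N)` and `f(x) = e_{2^n}(S 2^β x²)`. If `w = 2^γ u` with `u`
odd and `γ < α`, every `x ≡ w (mod 2^α)` is `2^γ` times an odd number, and the shift
`x ↦ x + 2^{n-β-2-γ}` (a multiple of `2^α`) changes `S 2^β x²` by an odd multiple of
`2^{n-1}` modulo `2^n`, so it negates `f`. The sum of `f` over the residue class, taken over
a full period, therefore vanishes. When `2^α ∣ w`, the class of `w` thus carries the whole
sum over `[0, 2^n)`, which is `2^β G(S; 2^{n-β})` because `f(x) = e_{2^{n-β}}(S x²)` has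
period `2^{n-β}`.
-/

noncomputable def expFrac (N : ℕ) (a : ℤ) : ℂ :=
  Complex.exp (2 * Real.pi * Complex.I * (a : ℂ) / (N : ℂ))

lemma expFrac_add (N : ℕ) (a b : ℤ) : expFrac N (a + b) = expFrac N a * expFrac N b := by
  rw [expFrac, expFrac, expFrac, ← Complex.exp_add]
  push_cast
  ring_nf

lemma expFrac_add_natCast_mul (N : ℕ) (a b : ℤ) : expFrac N (a + N * b) = expFrac N a := by
  rcases eq_or_ne N 0 with rfl | hN
  · simp
  have h : expFrac N (N * b) = 1 := by
    rw [expFrac, ← Complex.exp_int_mul_two_pi_mul_I b]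
    push_cast
    field_simp
  rw [expFrac_add, h, mul_one]

lemma expFrac_two_mul_add_mul_odd (M : ℕ) (hM : M ≠ 0) (a : ℤ) {u : ℤ} (hu : Odd u) :
    expFrac (2 * M) (a + M * u) = -expFrac (2 * M) a := by
  have h : expFrac (2 * M) (M * u) = -1 := by
    rw [expFrac, ← hu.neg_one_zpow, ← Complex.exp_pi_mul_I, ← Complex.exp_int_mul]
    push_cast
    field_simp
  rw [expFrac_add, h, mul_neg_one]

lemma expFrac_mul_mul (d N : ℕ) (hd : d ≠ 0) (a : ℤ) :
    expFrac (d * N) (d * a) = expFrac N a := by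
  rw [expFrac, expFrac]
  push_cast
  congr 1
  field_simp

lemma periodic_expFrac_mul_sq (N : ℕ) (c : ℤ) :
    Function.Periodic (fun x : ℕ => expFrac N (c * (x : ℤ) ^ 2)) N := fun x => by
  have hsq : c * ((x + N : ℕ) : ℤ) ^ 2 = c * (x : ℤ) ^ 2 + N * (c * (2 * x + N)) := by
    push_cast
    ring
  simp only [hsq, expFrac_add_natCast_mul]

section PeriodicSum

variable {M : Type*} {g : ℕ → M} {N : ℕ}

lemma Function.Periodic.sum_range_add [AddCancelCommMonoid M] (hg : Function.Periodic g N)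
    (h : ℕ) :
    ∑ x ∈ range N, g (x + h) = ∑ x ∈ range N, g x := by
  induction h with
  | zero => rfl
  | succ h ih =>
    have hN : g (N + h) = g (0 + h) := by rw [zero_add, add_comm, hg]
    have hsplit := sum_range_succ' (fun x => g (x + h)) N
    rw [sum_range_succ, hN] at hsplit
    simp only [add_right_comm _ 1 h] at hsplit ⊢
    rw [← ih]
    exact add_right_cancel hsplit.symm

lemma Function.Periodic.sum_range_mul_s9 [AddCommMonoid M] (hg : Function.Periodic g N) (q : ℕ) :
    ∑ x ∈ range (q * N), g x = q • ∑ x ∈ range N, g x := by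
  induction q with
  | zero => simp
  | succ q ih =>
    rw [add_mul, one_mul, Finset.sum_range_add, ih, succ_nsmul]
    simp only [add_comm (q * N)]
    exact congrArg _ (sum_congr rfl fun x _ => by simpa using hg.nat_mul q x)

end PeriodicSum

lemma Function.Antiperiodic.sum_range_eq_zero_s9 {R : Type*} [NonAssocRing R] [NoZeroDivisors R]
    [CharZero R] {g : ℕ → R} {N h : ℕ} (hanti : Function.Antiperiodic g h)
    (hper : Function.Periodic g N) :
    ∑ x ∈ range N, g x = 0 := by
  refine CharZero.eq_neg_self_iff.mp ?_
  calc ∑ x ∈ range N, g x = ∑ x ∈ range N, g (x + h) := (hper.sum_range_add h).symm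
    _ = -∑ x ∈ range N, g x := by
      rw [← sum_neg_distrib]
      exact sum_congr rfl fun x _ => hanti x

lemma Int.exists_eq_two_pow_mul_odd {w : ℤ} (hw : w ≠ 0) : ∃ γ u, Odd u ∧ w = 2 ^ γ * u := by
  obtain ⟨γ, m, hm, hwm⟩ := Nat.exists_eq_two_pow_mul_odd (Int.natAbs_ne_zero.mpr hw)
  have hm' : Odd (m : ℤ) := by exact_mod_cast hm
  rcases Int.natAbs_eq w with h | h
  · exact ⟨γ, m, hm', by rw [h, hwm]; push_cast; ring⟩
  · exact ⟨γ, -m, hm'.neg, by rw [h, hwm]; push_cast; ring⟩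

lemma Int.exists_eq_two_pow_mul_odd_of_modEq {x u : ℤ} {γ α : ℕ} (hu : Odd u) (hγ : γ < α)
    (hx : x ≡ 2 ^ γ * u [ZMOD 2 ^ α]) : ∃ v, Odd v ∧ x = 2 ^ γ * v := by
  obtain ⟨d, rfl⟩ : ∃ d, α = γ + 1 + d := ⟨α - γ - 1, by omega⟩
  obtain ⟨k, hk⟩ := hx.symm.dvd
  exact ⟨u + 2 * (2 ^ d * k), hu.add_even (even_two_mul _), by linear_combination hk⟩

lemma expFrac_two_pow_antiperiodic {S v : ℤ} (hS : Odd S) (hv : Odd v) (γ β j : ℕ) :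
    expFrac (2 ^ (2 * γ + β + 4 + j)) (S * 2 ^ β * (2 ^ γ * v + 2 ^ (γ + j + 2)) ^ 2) =
      -expFrac (2 ^ (2 * γ + β + 4 + j)) (S * 2 ^ β * (2 ^ γ * v) ^ 2) := by
  have hN : 2 ^ (2 * γ + β + 4 + j) = 2 * 2 ^ (2 * γ + β + 3 + j) := by ring
  have key : S * 2 ^ β * (2 ^ γ * v + 2 ^ (γ + j + 2)) ^ 2 =
      S * 2 ^ β * (2 ^ γ * v) ^ 2 + ((2 ^ (2 * γ + β + 3 + j) : ℕ) : ℤ) * (S * v) +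
        ((2 ^ (2 * γ + β + 4 + j) : ℕ) : ℤ) * (S * 2 ^ j) := by
    push_cast
    ring
  rw [key, expFrac_add_natCast_mul, hN, expFrac_two_mul_add_mul_odd _ (by positivity) _ (hS.mul hv)]

lemma sum_filter_modEq_expFrac_eq_zero {n α β : ℕ} {S w : ℤ} (hS : Odd S)
    (hw : ¬ (2 : ℤ) ^ α ∣ w) (h : 2 * α + β + 2 ≤ n) :
    ∑ x ∈ (range (2 ^ n)).filter (fun x : ℕ => (x : ℤ) ≡ w [ZMOD 2 ^ α]),
      expFrac (2 ^ n) (S * 2 ^ β * (x : ℤ) ^ 2) = 0 := by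
  obtain ⟨γ, u, hu, rfl⟩ :=
    Int.exists_eq_two_pow_mul_odd (w := w) (by rintro rfl; exact hw (dvd_zero _))
  have hγ : γ < α := lt_of_not_ge fun hαγ => hw (dvd_mul_of_dvd_left (pow_dvd_pow 2 hαγ) u)
  obtain ⟨j, rfl⟩ : ∃ j, n = 2 * γ + β + 4 + j := ⟨n - (2 * γ + β + 4), by omega⟩
  have hshift {k : ℕ} (hk : α ≤ k) (x : ℕ) :
      ((x + 2 ^ k : ℕ) : ℤ) ≡ 2 ^ γ * u [ZMOD 2 ^ α] ↔ (x : ℤ) ≡ 2 ^ γ * u [ZMOD 2 ^ α] := by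
    have hdvd : (2 : ℤ) ^ α ∣ 2 ^ k := pow_dvd_pow 2 hk
    have hx : ((x + 2 ^ k : ℕ) : ℤ) ≡ x [ZMOD 2 ^ α] := by
      simpa using (Int.modEq_zero_iff_dvd.mpr hdvd).add_left (x : ℤ)
    exact ⟨hx.symm.trans, hx.trans⟩
  rw [sum_filter]
  -- `2 ^ (γ + j + 2)` is the shift `2^{n-β-2-γ}` of the proof idea
  refine Function.Antiperiodic.sum_range_eq_zero_s9 (h := 2 ^ (γ + j + 2))
    (fun x => ?_) (fun x => ?_)
  · simp only [hshift (by omega : α ≤ γ + j + 2)]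
    by_cases hx : (x : ℤ) ≡ 2 ^ γ * u [ZMOD 2 ^ α]
    · obtain ⟨v, hv, hxv⟩ := Int.exists_eq_two_pow_mul_odd_of_modEq hu hγ hx
      rw [if_pos hx, if_pos hx]
      push_cast
      rw [hxv]
      exact expFrac_two_pow_antiperiodic hS hv γ β j
    · rw [if_neg hx, if_neg hx, neg_zero]
  · have hf := periodic_expFrac_mul_sq (2 ^ (2 * γ + β + 4 + j)) (S * 2 ^ β) x
    simp only [hshift (by omega : α ≤ 2 * γ + β + 4 + j)] at hf ⊢
    rw [hf]

lemma sum_filter_modEq_expFrac_of_dvd {n α β : ℕ} {S w : ℤ} (hS : Odd S)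
    (hw : (2 : ℤ) ^ α ∣ w) (h : 2 * α + β + 2 ≤ n) :
    ∑ x ∈ (range (2 ^ n)).filter (fun x : ℕ => (x : ℤ) ≡ w [ZMOD 2 ^ α]),
      expFrac (2 ^ n) (S * 2 ^ β * (x : ℤ) ^ 2) =
    ∑ x ∈ range (2 ^ n), expFrac (2 ^ n) (S * 2 ^ β * (x : ℤ) ^ 2) := by
  have hpos : (0 : ℤ) < 2 ^ α := by positivity
  symm
  rw [← sum_fiberwise_of_maps_to (g := fun x : ℕ => (x : ℤ) % 2 ^ α) (t := Ico 0 (2 ^ α))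
    fun x _ => mem_Ico.mpr ⟨Int.emod_nonneg _ hpos.ne', Int.emod_lt_of_pos _ hpos⟩]
  rw [sum_eq_single_of_mem 0 (by simp [hpos])]
  · simp only [Int.ModEq, Int.emod_eq_zero_of_dvd hw]
  · intro r hr hr0
    obtain ⟨hr0', hr'⟩ := mem_Ico.mp hr
    have hrα : ¬ (2 : ℤ) ^ α ∣ r := fun hdvd =>
      hr0 (Int.eq_zero_of_dvd_of_nonneg_of_lt hr0' hr' hdvd)
    rw [← sum_filter_modEq_expFrac_eq_zero hS hrα h]
    simp only [Int.ModEq, Int.emod_eq_of_lt hr0' hr']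

lemma sum_range_expFrac_two_pow_eq_Gsum {n β : ℕ} (S : ℤ) (hβ : β ≤ n) :
    ∑ x ∈ range (2 ^ n), expFrac (2 ^ n) (S * 2 ^ β * (x : ℤ) ^ 2) =
      2 ^ β * Gsum S (2 ^ (n - β)) := by
  obtain ⟨m, rfl⟩ := Nat.exists_eq_add_of_le hβ
  have hscale (x : ℕ) : expFrac (2 ^ β * 2 ^ m) (S * 2 ^ β * (x : ℤ) ^ 2) =
      expFrac (2 ^ m) (S * (x : ℤ) ^ 2) := by
    rw [← expFrac_mul_mul (2 ^ β) (2 ^ m) (by positivity) (S * (x : ℤ) ^ 2)]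
    congr 1
    push_cast
    ring
  rw [Nat.add_sub_cancel_left, pow_add]
  simp only [hscale]
  rw [(periodic_expFrac_mul_sq _ S).sum_range_mul_s9, nsmul_eq_mul]
  push_cast
  rfl

theorem stmt_9_general (n : ℕ) (S : ℤ) (hS : Odd S) (w : ℤ)
    (α β : ℕ) (h : 2 * α + β + 2 ≤ n) :
    (¬ (2 : ℤ) ^ α ∣ w →
      ∑ x ∈ (Finset.range (2 ^ n)).filter (fun x : ℕ => (x : ℤ) % (2 : ℤ) ^ α = w % (2 : ℤ) ^ α),
          Complex.exp (2 * Real.pi * Complex.I *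
            ((S * 2 ^ β * (x : ℤ) ^ 2 : ℤ) : ℂ) / ((2 : ℂ) ^ n)) = 0) ∧
    ((2 : ℤ) ^ α ∣ w →
      ∑ x ∈ (Finset.range (2 ^ n)).filter (fun x : ℕ => (x : ℤ) % (2 : ℤ) ^ α = w % (2 : ℤ) ^ α),
          Complex.exp (2 * Real.pi * Complex.I *
            ((S * 2 ^ β * (x : ℤ) ^ 2 : ℤ) : ℂ) / ((2 : ℂ) ^ n)) =
        (2 : ℂ) ^ β * Gsum S (2 ^ (n - β))) := by
  have hsummand (x : ℕ) : Complex.exp (2 * Real.pi * Complex.I *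
      ((S * 2 ^ β * (x : ℤ) ^ 2 : ℤ) : ℂ) / ((2 : ℂ) ^ n)) =
      expFrac (2 ^ n) (S * 2 ^ β * (x : ℤ) ^ 2) := by
    simp [expFrac]
  simp only [hsummand]
  exact ⟨fun hw => sum_filter_modEq_expFrac_eq_zero hS hw h, fun hw =>
    (sum_filter_modEq_expFrac_of_dvd hS hw h).trans
      (sum_range_expFrac_two_pow_eq_Gsum S (by omega))⟩

theorem stmt_9 (n : ℕ) (hn : 0 < n) (S : ℤ) (hS : Odd S) (w : ℤ)
    (α β : ℕ) (hα : α ≤ n) (hβ : β ≤ n) (h : 2 * α + β + 2 ≤ n) :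
    (¬ (2 : ℤ) ^ α ∣ w →
      ∑ x ∈ (Finset.range (2 ^ n)).filter (fun x : ℕ => (x : ℤ) % (2 : ℤ) ^ α = w % (2 : ℤ) ^ α),
          Complex.exp (2 * Real.pi * Complex.I *
            ((S * 2 ^ β * (x : ℤ) ^ 2 : ℤ) : ℂ) / ((2 : ℂ) ^ n)) = 0) ∧
    ((2 : ℤ) ^ α ∣ w →
      ∑ x ∈ (Finset.range (2 ^ n)).filter (fun x : ℕ => (x : ℤ) % (2 : ℤ) ^ α = w % (2 : ℤ) ^ α),
          Complex.exp (2 * Real.pi * Complex.I *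
            ((S * 2 ^ β * (x : ℤ) ^ 2 : ℤ) : ℂ) / ((2 : ℂ) ^ n)) =
        (2 : ℂ) ^ β * Gsum S (2 ^ (n - β))) :=
  stmt_9_general n S hS w α β h
end
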